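/- Let L be a Lie algebra over ℂ and let J : L → L be a ℂ-linear map with J ∘ J = −Id and vanishing Nijenhuis torsion T_J = 0 (a complex structure). Set p⁺ := (1/2) • (Id − i • J) and define B(Z,W) := [Z,W]_{p⁺}. Then for all Z, W ∈ L: (i) B(Z,W) = (1/2) • ([Z,W] − i • [Z,W]_J); (ii) B is antisymmetric and satisfies the Jacobi identity B(Z, B(W,U)) + B(W, B(U,Z)) + B(U, B(Z,W)) = 0; (iii) p⁺ is a morphism of brackets: p⁺ (B(Z,W)) = [p⁺ Z, p⁺ W]. -/
import Mathlib


/-- The Nijenhuis torsion of an endomorphism `N` of a Lie ring: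
`T_N(Z,W) = [N Z, N W] − N [N Z, W] − N [Z, N W] + N (N [Z, W])`. -/
def nijenhuisTorsion {L : Type*} [LieRing L] (N : L → L) (Z W : L) : L :=
  ⁅N Z, N W⁆ - N ⁅N Z, W⁆ - N ⁅Z, N W⁆ + N (N ⁅Z, W⁆)

/-- The contracted bracket `[Z,W]_N = [N Z, W] + [Z, N W] − N [Z, W]`. -/
def contractedBracket {L : Type*} [LieRing L] (N : L → L) (Z W : L) : L :=
  ⁅N Z, W⁆ + ⁅Z, N W⁆ - N ⁅Z, W⁆

section aux
variable {L : Type*} [LieRing L] [LieAlgebra ℂ L] (J : L →ₗ[ℂ] L)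

lemma aux_Csmul (a : ℂ) (Z x : L) :
    contractedBracket ⇑J Z (a • x) = a • contractedBracket ⇑J Z x := by
  simp [contractedBracket, lie_smul, map_smul, smul_add, smul_sub]

lemma aux_Csub (Z x y : L) :
    contractedBracket ⇑J Z (x - y) = contractedBracket ⇑J Z x - contractedBracket ⇑J Z y := by
  simp only [contractedBracket, lie_sub, map_sub]
  module

lemma aux_Cskew (Z W : L) :
    contractedBracket ⇑J Z W = -contractedBracket ⇑J W Z := by
  have h1 : J ⁅Z, W⁆ = -J ⁅W, Z⁆ := by rw [← map_neg, lie_skew]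
  simp only [contractedBracket]
  linear_combination (norm := module) (lie_skew (J Z) W).symm + (lie_skew Z (J W)).symm - h1

-- L2
lemma aux_L2 (Z W U : L) :
    ⁅Z, contractedBracket ⇑J W U⁆ + contractedBracket ⇑J Z ⁅W, U⁆
    + ⁅W, contractedBracket ⇑J U Z⁆ + contractedBracket ⇑J W ⁅U, Z⁆
    + ⁅U, contractedBracket ⇑J Z W⁆ + contractedBracket ⇑J U ⁅Z, W⁆ = 0 := by
  have hJ0 : J ⁅Z, ⁅W, U⁆⁆ + J ⁅W, ⁅U, Z⁆⁆ + J ⁅U, ⁅Z, W⁆⁆ = 0 := by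
    rw [← map_add, ← map_add, lie_jacobi, map_zero]
  simp only [contractedBracket, lie_add, lie_sub, map_add, map_sub]
  linear_combination (norm := module) lie_jacobi (J Z) W U + lie_jacobi (J W) U Z +
    lie_jacobi (J U) Z W - hJ0

-- L3
lemma aux_L3 (hJ2 : ∀ x, J (J x) = -x)
    (hTor : ∀ A B : L, ⁅J A, J B⁆ = J ⁅J A, B⁆ + J ⁅A, J B⁆ + ⁅A, B⁆) (Z W U : L) :
    contractedBracket ⇑J Z (contractedBracket ⇑J W U)
    + contractedBracket ⇑J W (contractedBracket ⇑J U Z)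
    + contractedBracket ⇑J U (contractedBracket ⇑J Z W) = 0 := by
  have hA : ∀ A B C : L, ⁅A, J ⁅J B, C⁆⁆ + ⁅A, J ⁅B, J C⁆⁆
      = ⁅A, ⁅J B, J C⁆⁆ - ⁅A, ⁅B, C⁆⁆ := by
    intro A B C
    rw [← lie_add, ← lie_sub]
    congr 1
    linear_combination (norm := module) (hTor B C).symm
  have hB : J ⁅J Z, ⁅W, U⁆⁆ + J ⁅Z, ⁅J W, U⁆⁆ + J ⁅Z, ⁅W, J U⁆⁆
      + J ⁅J W, ⁅U, Z⁆⁆ + J ⁅W, ⁅J U, Z⁆⁆ + J ⁅W, ⁅U, J Z⁆⁆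
      + J ⁅J U, ⁅Z, W⁆⁆ + J ⁅U, ⁅J Z, W⁆⁆ + J ⁅U, ⁅Z, J W⁆⁆ = 0 := by
    rw [← map_add, ← map_add, ← map_add, ← map_add, ← map_add, ← map_add, ← map_add,
      ← map_add]
    rw [show ⁅J Z, ⁅W, U⁆⁆ + ⁅Z, ⁅J W, U⁆⁆ + ⁅Z, ⁅W, J U⁆⁆
      + ⁅J W, ⁅U, Z⁆⁆ + ⁅W, ⁅J U, Z⁆⁆ + ⁅W, ⁅U, J Z⁆⁆
      + ⁅J U, ⁅Z, W⁆⁆ + ⁅U, ⁅J Z, W⁆⁆ + ⁅U, ⁅Z, J W⁆⁆ = 0 from by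
        linear_combination (norm := module) lie_jacobi (J Z) W U + lie_jacobi (J W) U Z +
          lie_jacobi (J U) Z W, map_zero]
  simp only [contractedBracket, lie_add, lie_sub, add_lie, sub_lie, map_add, map_sub, hJ2,
    lie_neg, sub_neg_eq_add]
  linear_combination (norm := module) (- hTor Z ⁅W, U⁆ - hTor W ⁅U, Z⁆ - hTor U ⁅Z, W⁆)
    + hA Z W U + hA W U Z + hA U Z W - hB
    + lie_jacobi (J Z) (J W) U + lie_jacobi (J W) (J U) Z + lie_jacobi (J U) (J Z) W
    - lie_jacobi Z W U

end aux

theorem stmt_17 {L : Type*} [LieRing L] [LieAlgebra ℂ L]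
    (J : L →ₗ[ℂ] L) (hJ : J ∘ₗ J = -LinearMap.id)
    (hT : ∀ Z W : L, nijenhuisTorsion ⇑J Z W = 0) :
    let p : L →ₗ[ℂ] L := (1 / 2 : ℂ) • ((LinearMap.id : L →ₗ[ℂ] L) - Complex.I • J)
    let B : L → L → L := fun Z W => contractedBracket ⇑p Z W
    (∀ Z W : L,
      B Z W = (1 / 2 : ℂ) • (⁅Z, W⁆ - Complex.I • contractedBracket ⇑J Z W)) ∧
    (∀ Z W : L, B Z W = -B W Z) ∧
    (∀ Z W U : L, B Z (B W U) + B W (B U Z) + B U (B Z W) = 0) ∧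
    (∀ Z W : L, p (B Z W) = ⁅p Z, p W⁆) := by
  intro p B
  have hJ2 : ∀ x : L, J (J x) = -x := by
    intro x
    have := congrArg (fun f : L →ₗ[ℂ] L => f x) hJ
    simpa using this
  have hTor : ∀ A Bv : L, ⁅J A, J Bv⁆ = J ⁅J A, Bv⁆ + J ⁅A, J Bv⁆ + ⁅A, Bv⁆ := by
    intro A Bv
    have := hT A Bv
    simp only [nijenhuisTorsion, hJ2] at this
    linear_combination (norm := module) this
  have hp : ∀ x : L, p x = (1 / 2 : ℂ) • (x - Complex.I • J x) := by
    intro x; simp [p]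
  have e1 : ∀ Z W : L,
      B Z W = (1 / 2 : ℂ) • (⁅Z, W⁆ - Complex.I • contractedBracket ⇑J Z W) := by
    intro Z W
    simp only [B, contractedBracket, hp, smul_lie, lie_smul, sub_lie, lie_sub, map_smul,
      map_sub, map_add, smul_sub, smul_add, smul_smul]
    module
  refine ⟨e1, ?_, ?_, ?_⟩
  · intro Z W
    rw [e1, e1, aux_Cskew J Z W]
    linear_combination (norm := module) (-(1/2 : ℂ)) • lie_skew W Z
  · intro Z W U
    simp only [e1, aux_Csub, aux_Csmul, lie_smul, lie_sub, smul_sub, smul_smul]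
    have h2 := aux_L2 J Z W U
    have h3 := aux_L3 J hJ2 hTor Z W U
    linear_combination (norm := match_scalars <;> first | ring1 | (ring_nf; simp [Complex.I_sq]))
      ((1/4 : ℂ)) • lie_jacobi Z W U
      - ((Complex.I/4 : ℂ)) • h2 - ((1/4 : ℂ)) • h3
  · intro Z W
    rw [e1]
    simp only [hp, map_smul, map_sub, smul_lie, lie_smul, smul_sub, smul_smul,
      contractedBracket, map_add, sub_lie, lie_sub, hJ2]
    linear_combination (norm := match_scalars <;> first | ring1 | (ring_nf; simp [Complex.I_sq]))
      ((1/4 : ℂ)) • hTor Z W
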